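/- arXiv:2007.14961 — 3 statements merged into one kernel-verified Lean document; each statement's English description precedes it below -/
import Mathlib

section
/- If (w1, ..., wI) ~ logisticMCAR(m̃, ρ, Σ; G), then for each i and all l, k ∈ {1,...,H}: E[log(w_{il}/w_{ik}) | w_{-i}] = (ρ|U_i| + 1 − ρ)^{-1} · log( (m_{il}/m_{ik})^{1−ρ} · Π_{j∈U_i} (w_{jl}/w_{jk})^ρ ), where U_i = {j : g_{ij} > 0}, |U_i| = Σ_j g_{ij}, and m_i = alr^{-1}(m̃_i). -/
open scoped BigOperators
open Finset

/-! The conditional mean is linear in the alr coordinates, and a difference of two alr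
coordinates is a log-ratio `log (w_l / w_k)` in which the reference part cancels. Since the
weights `g_ij` are `0` or `1`, the weighted sum over all `j` is the sum over the neighbours
`U_i`, and the logarithm turns the weighted geometric mean into that linear combination. -/

def Spos (H : ℕ) : Set (Fin (H + 1) → ℝ) :=
  {w | (∀ h, 0 < w h) ∧ ∑ h, w h = 1}

/-- Extended additive log-ratio: `log (w_l / w_H)` for every index `l` (it is `0`
at `l = H`). -/
noncomputable def alrE {H : ℕ} (w : Fin (H + 1) → ℝ) (l : Fin (H + 1)) : ℝ :=
  Real.log (w l / w (Fin.last H))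

lemma alrE_sub_alrE {H : ℕ} {v : Fin (H + 1) → ℝ} (hv : ∀ h, 0 < v h) (l k : Fin (H + 1)) :
    alrE v l - alrE v k = Real.log (v l / v k) := by
  have hlast := hv (Fin.last H)
  rw [alrE, alrE, ← Real.log_div (div_pos (hv l) hlast).ne' (div_pos (hv k) hlast).ne',
    div_div_div_cancel_right₀ hlast.ne']

lemma sum_filter_pos_eq_sum_mul {ι : Type*} (s : Finset ι) {g : ι → ℝ}
    (hg : ∀ j, g j = 0 ∨ g j = 1) (f : ι → ℝ) :
    ∑ j ∈ s.filter (fun j => 0 < g j), f j = ∑ j ∈ s, g j * f j := by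
  rw [sum_filter]
  refine sum_congr rfl fun j _ => ?_
  rcases hg j with h | h <;> simp [h]

lemma log_prod_rpow {ι : Type*} (s : Finset ι) {x : ι → ℝ} (hx : ∀ j ∈ s, 0 < x j) (ρ : ℝ) :
    Real.log (∏ j ∈ s, x j ^ ρ) = ρ * ∑ j ∈ s, Real.log (x j) := by
  rw [Real.log_prod fun j hj => (Real.rpow_pos_of_pos (hx j hj) ρ).ne', mul_sum]
  exact sum_congr rfl fun j hj => Real.log_rpow (hx j hj) ρ

theorem logisticMCAR_conditional_mean_general
    (H I : ℕ) (g : Fin I → Fin I → ℝ)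
    (hg01 : ∀ i j, g i j = 0 ∨ g i j = 1)
    (ρ : ℝ)
    (w : Fin I → Fin (H + 1) → ℝ) (hw : ∀ j, w j ∈ Spos H)
    (m : Fin I → Fin (H + 1) → ℝ) (hm : ∀ i, m i ∈ Spos H)
    (i : Fin I) (l k : Fin (H + 1)) :
    -- conditional expectation of log(w_{il}/w_{ik}) given w_{-i}
    (ρ * ∑ j, g i j * alrE (w j) l + (1 - ρ) * alrE (m i) l) /
        (ρ * ∑ j, g i j + 1 - ρ) -
      (ρ * ∑ j, g i j * alrE (w j) k + (1 - ρ) * alrE (m i) k) /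
        (ρ * ∑ j, g i j + 1 - ρ) =
    (ρ * ∑ j, g i j + 1 - ρ)⁻¹ *
      Real.log ((m i l / m i k) ^ (1 - ρ) *
        ∏ j ∈ univ.filter (fun j => 0 < g i j), (w j l / w j k) ^ ρ) := by
  have hw_ratio : ∀ j, 0 < w j l / w j k := fun j => div_pos ((hw j).1 l) ((hw j).1 k)
  have hm_ratio : 0 < m i l / m i k := div_pos ((hm i).1 l) ((hm i).1 k)
  rw [div_sub_div_same, div_eq_inv_mul]
  congr 1
  rw [Real.log_mul (Real.rpow_pos_of_pos hm_ratio _).ne'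
      (prod_pos fun j _ => Real.rpow_pos_of_pos (hw_ratio j) ρ).ne',
    Real.log_rpow hm_ratio, log_prod_rpow _ (fun j _ => hw_ratio j),
    sum_filter_pos_eq_sum_mul _ (hg01 i), ← alrE_sub_alrE (hm i).1]
  simp_rw [← alrE_sub_alrE (hw _).1, mul_sub, sum_sub_distrib]
  ring

/-- Proposition 1 (conditional means of the logisticMCAR).  Under the MCAR model,
`E[alr(w_i) | w_{-i}]` is the vector
`(ρ ∑_j g_{ij} alr(w_j) + (1-ρ) alr(m_i)) / (ρ ∑_j g_{ij} + 1 - ρ)`; by linearity,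
`E[log(w_{il}/w_{ik}) | w_{-i}]` is the difference of the `l`-th and `k`-th
(extended) coordinates of this vector, and it equals
`(ρ|U_i| + 1 - ρ)⁻¹ log( (m_{il}/m_{ik})^{1-ρ} ∏_{j∈U_i} (w_{jl}/w_{jk})^ρ )`. -/
theorem logisticMCAR_conditional_mean
    (H I : ℕ) (g : Fin I → Fin I → ℝ)
    (hg01 : ∀ i j, g i j = 0 ∨ g i j = 1)
    (hgsymm : ∀ i j, g i j = g j i) (hgdiag : ∀ i, g i i = 0)
    (ρ : ℝ) (hρ : ρ ∈ Set.Ioo (0 : ℝ) 1)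
    (w : Fin I → Fin (H + 1) → ℝ) (hw : ∀ j, w j ∈ Spos H)
    (m : Fin I → Fin (H + 1) → ℝ) (hm : ∀ i, m i ∈ Spos H)
    (i : Fin I) (l k : Fin (H + 1)) :
    -- conditional expectation of log(w_{il}/w_{ik}) given w_{-i}
    (ρ * ∑ j, g i j * alrE (w j) l + (1 - ρ) * alrE (m i) l) /
        (ρ * ∑ j, g i j + 1 - ρ) -
      (ρ * ∑ j, g i j * alrE (w j) k + (1 - ρ) * alrE (m i) k) /
        (ρ * ∑ j, g i j + 1 - ρ) =
    (ρ * ∑ j, g i j + 1 - ρ)⁻¹ *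
      Real.log ((m i l / m i k) ^ (1 - ρ) *
        ∏ j ∈ univ.filter (fun j => 0 < g i j), (w j l / w j k) ^ ρ) :=
  logisticMCAR_conditional_mean_general H I g hg01 ρ w hw m hm i l k
end

section
/- If (w1, ..., wI) ~ logisticMCAR(m̃, ρ, Σ; G) with m̃ = 0, then Cov(log(w_{il}/w_{im}), log(w_{jl}/w_{jm})) = A_{ij}(Σ_{ll} − 2Σ_{lm} + Σ_{mm}) for l, m ∈ {1,...,H−1}, and Cov(log(w_{il}/w_{iH}), log(w_{jl}/w_{jH})) = A_{ij} Σ_{ll}, where A = (F − ρG)^{-1}. -/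
open scoped BigOperators
open MeasureTheory

noncomputable def alr {H : ℕ} (w : Fin (H + 1) → ℝ) : Fin H → ℝ :=
  fun j => Real.log (w j.castSucc / w (Fin.last H))

/-!
Every linear combination `Z c = ∑ c_{ir} alr(w_i)_r` is a centred Gaussian with variance
`cᵀ (A ⊗ Σ) c`; hence polarizing `Var (X + Y) = Var X + 2 Cov(X, Y) + Var Y` gives
`Cov(Z c, Z d) = cᵀ (A ⊗ Σ) d`. The log-ratios of the theorem are `Z c` for `c = e_i ⊗ (e_l - e_m)`
and `c = e_i ⊗ e_l`, because `log (w_l / w_m) = alr_l - alr_m`. The `toNNReal` in the variance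
is harmless since `A ⊗ Σ` is positive semidefinite: `F - ρG = (1 - ρ) I + ρ (D - G)` with `D - G`
a graph Laplacian, and inverses and Kronecker products preserve semidefiniteness.
-/

open Matrix ProbabilityTheory
open scoped Kronecker

namespace Matrix

variable {n : Type*} [Fintype n] [DecidableEq n]

theorem posSemidef_diagonal_sum_sub {G : Matrix n n ℝ} (hG : G.IsSymm) (hG0 : ∀ i j, 0 ≤ G i j) :
    (diagonal (fun i => ∑ j, G i j) - G).PosSemidef := by
  refine .of_dotProduct_mulVec_nonneg
    ((isHermitian_diagonal _).sub (isHermitian_iff_isSymm.mpr hG)) fun x => ?_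
  have hquad : star x ⬝ᵥ ((diagonal (fun i => ∑ j, G i j) - G) *ᵥ x)
      = ∑ i, ∑ j, G i j * x i * (x i - x j) := by
    rw [star_trivial, sub_mulVec, dotProduct_sub, funext (mulVec_diagonal _ x)]
    simp only [dotProduct, mulVec, Finset.sum_mul, Finset.mul_sum, ← Finset.sum_sub_distrib]
    exact Fintype.sum_congr _ _ fun i => Fintype.sum_congr _ _ fun j => by ring
  -- swapping `i` and `j` symmetrizes the sum into `½ ∑ G i j (x i - x j)²`
  have hswap : ∑ i, ∑ j, G i j * x i * (x i - x j) = ∑ i, ∑ j, G i j * x j * (x j - x i) := by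
    rw [Finset.sum_comm]
    exact Fintype.sum_congr _ _ fun i => Fintype.sum_congr _ _ fun j => by rw [hG.apply]
  have hsq : 2 * ∑ i, ∑ j, G i j * x i * (x i - x j) = ∑ i, ∑ j, G i j * (x i - x j) ^ 2 := by
    rw [two_mul]
    nth_rewrite 2 [hswap]
    simp only [← Finset.sum_add_distrib]
    exact Fintype.sum_congr _ _ fun i => Fintype.sum_congr _ _ fun j => by ring
  rw [hquad]
  nlinarith [Finset.sum_nonneg fun i (_ : i ∈ Finset.univ) => Finset.sum_nonneg
    fun j (_ : j ∈ Finset.univ) => mul_nonneg (hG0 i j) (sq_nonneg (x i - x j))]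

end Matrix

theorem posSemidef_mcarPrecision {n : Type*} [Fintype n] [DecidableEq n] {G : Matrix n n ℝ}
    (hG : G.IsSymm) (hG0 : ∀ i j, 0 ≤ G i j) {ρ : ℝ} (hρ0 : 0 ≤ ρ) (hρ1 : ρ ≤ 1) :
    (diagonal (fun i => ρ * ∑ j, G i j + 1 - ρ) - ρ • G).PosSemidef := by
  have hdecomp : diagonal (fun i => ρ * ∑ j, G i j + 1 - ρ) - ρ • G
      = (1 - ρ) • (1 : Matrix n n ℝ) + ρ • (diagonal (fun i => ∑ j, G i j) - G) := by
    ext i j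
    by_cases hij : i = j
    · subst hij; simp; ring
    · simp [hij]
  rw [hdecomp]
  exact (PosSemidef.one.smul (sub_nonneg.mpr hρ1)).add
    ((posSemidef_diagonal_sum_sub hG hG0).smul hρ0)

section KronForm

variable {ι κ : Type*} [Fintype ι] [Fintype κ]

def kronForm (A : Matrix ι ι ℝ) (S : Matrix κ κ ℝ) (u v : ι → κ → ℝ) : ℝ :=
  ∑ i, ∑ j, ∑ r, ∑ s, u i r * (A i j * S r s) * v j s

theorem kronForm_eq_dotProduct_kronecker (A : Matrix ι ι ℝ) (S : Matrix κ κ ℝ)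
    (u v : ι → κ → ℝ) :
    kronForm A S u v = Function.uncurry u ⬝ᵥ ((A ⊗ₖ S) *ᵥ Function.uncurry v) := by
  simp only [kronForm, dotProduct, mulVec, Fintype.sum_prod_type, Finset.mul_sum,
    kroneckerMap_apply, Function.uncurry_apply_pair]
  refine Fintype.sum_congr _ _ fun i => ?_
  rw [Finset.sum_comm]
  exact Fintype.sum_congr _ _ fun j => Fintype.sum_congr _ _ fun r =>
    Fintype.sum_congr _ _ fun s => by ring

theorem kronForm_self_nonneg {A : Matrix ι ι ℝ} {S : Matrix κ κ ℝ} (hA : A.PosSemidef)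
    (hS : S.PosSemidef) (u : ι → κ → ℝ) : 0 ≤ kronForm A S u u := by
  classical
  simpa [kronForm_eq_dotProduct_kronecker] using (hA.kronecker hS).dotProduct_mulVec_nonneg
    (Function.uncurry u)

theorem kronForm_add_add (A : Matrix ι ι ℝ) (S : Matrix κ κ ℝ) (u v : ι → κ → ℝ) :
    kronForm A S (u + v) (u + v)
      = kronForm A S u u + kronForm A S u v + kronForm A S v u + kronForm A S v v := by
  simp only [kronForm, Pi.add_apply, add_mul, mul_add, Finset.sum_add_distrib]
  ring

theorem kronForm_comm {A : Matrix ι ι ℝ} {S : Matrix κ κ ℝ} (hA : A.IsSymm) (hS : S.IsSymm)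
    (u v : ι → κ → ℝ) : kronForm A S v u = kronForm A S u v := by
  rw [kronForm, Finset.sum_comm]
  refine Fintype.sum_congr _ _ fun i => Fintype.sum_congr _ _ fun j => ?_
  rw [Finset.sum_comm]
  exact Fintype.sum_congr _ _ fun r => Fintype.sum_congr _ _ fun s => by
    rw [hA.apply, hS.apply]; ring

theorem kronForm_single_single [DecidableEq ι] (A : Matrix ι ι ℝ) (S : Matrix κ κ ℝ)
    (i j : ι) (a b : κ → ℝ) :
    kronForm A S (Pi.single i a) (Pi.single j b) = A i j * (a ⬝ᵥ (S *ᵥ b)) := by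
  rw [kronForm, Fintype.sum_eq_single i fun i' hi' => by simp [hi']]
  rw [Fintype.sum_eq_single j fun j' hj' => by simp [hj']]
  simp only [Pi.single_eq_same, dotProduct, mulVec, Finset.mul_sum]
  exact Fintype.sum_congr _ _ fun r => Fintype.sum_congr _ _ fun s => by ring

theorem sum_sum_single_mul [DecidableEq ι] (i : ι) (a : κ → ℝ) (y : ι → κ → ℝ) :
    ∑ i', ∑ r, (Pi.single i a : ι → κ → ℝ) i' r * y i' r = a ⬝ᵥ y i := by
  rw [Fintype.sum_eq_single i fun i' hi' => by simp [hi']]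
  simp only [Pi.single_eq_same, dotProduct]

end KronForm

section Gaussian

open scoped NNReal

variable {Ω : Type*} {mΩ : MeasurableSpace Ω} {P : Measure Ω}

theorem hasLaw_of_map_eq {𝓧 : Type*} {m𝓧 : MeasurableSpace 𝓧} {X : Ω → 𝓧} {μ : Measure 𝓧}
    [NeZero μ] (h : P.map X = μ) : HasLaw X μ P :=
  ⟨.of_map_ne_zero (h ▸ NeZero.ne μ), h⟩

theorem memLp_two_of_map_eq_gaussianReal {X : Ω → ℝ} {m : ℝ} {v : ℝ≥0}
    (h : P.map X = gaussianReal m v) : MemLp X 2 P :=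
  (hasLaw_of_map_eq h).hasGaussianLaw.memLp_two

theorem variance_of_map_eq_gaussianReal {X : Ω → ℝ} {m : ℝ} {v : ℝ≥0}
    (h : P.map X = gaussianReal m v) : Var[X; P] = v := by
  rw [(hasLaw_of_map_eq h).variance_eq, variance_id_gaussianReal]

variable {ι κ : Type*} [Fintype ι] [Fintype κ]

theorem covariance_eq_kronForm [IsProbabilityMeasure P] {Y : Ω → ι → κ → ℝ}
    {A : Matrix ι ι ℝ} {S : Matrix κ κ ℝ} (hA : A.PosSemidef) (hS : S.PosSemidef)
    (m : (ι → κ → ℝ) → ℝ)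
    (hY : ∀ c, P.map (fun ω => ∑ i, ∑ r, c i r * Y ω i r) =
      gaussianReal (m c) (kronForm A S c c).toNNReal)
    (u v : ι → κ → ℝ) :
    cov[fun ω => ∑ i, ∑ r, u i r * Y ω i r, fun ω => ∑ i, ∑ r, v i r * Y ω i r; P] =
      kronForm A S u v := by
  set Z : (ι → κ → ℝ) → Ω → ℝ := fun c ω => ∑ i, ∑ r, c i r * Y ω i r
  have hvar : ∀ c, Var[Z c; P] = kronForm A S c c := fun c => by
    rw [variance_of_map_eq_gaussianReal (hY c), Real.coe_toNNReal _ (kronForm_self_nonneg hA hS c)]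
  have hadd : Z (u + v) = Z u + Z v := by
    funext ω
    simp only [Z, Pi.add_apply, add_mul, Finset.sum_add_distrib]
  have hpolar := variance_add (memLp_two_of_map_eq_gaussianReal (hY u))
    (memLp_two_of_map_eq_gaussianReal (hY v))
  rw [← hadd, hvar, hvar, hvar, kronForm_add_add,
    kronForm_comm (isHermitian_iff_isSymm.mp hA.isHermitian)
      (isHermitian_iff_isSymm.mp hS.isHermitian) u v] at hpolar
  linarith

theorem integral_dotProduct_mul_sub_eq [IsProbabilityMeasure P] [DecidableEq ι]
    {Y : Ω → ι → κ → ℝ} {A : Matrix ι ι ℝ} {S : Matrix κ κ ℝ} (hA : A.PosSemidef)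
    (hS : S.PosSemidef) (m : (ι → κ → ℝ) → ℝ)
    (hY : ∀ c, P.map (fun ω => ∑ i, ∑ r, c i r * Y ω i r) =
      gaussianReal (m c) (kronForm A S c c).toNNReal)
    (i j : ι) (a b : κ → ℝ) :
    ∫ ω, (a ⬝ᵥ Y ω i) * (b ⬝ᵥ Y ω j) ∂P - (∫ ω, a ⬝ᵥ Y ω i ∂P) * ∫ ω, b ⬝ᵥ Y ω j ∂P =
      A i j * (a ⬝ᵥ (S *ᵥ b)) := by
  have hsingle : ∀ k (c : κ → ℝ),
      (fun ω => c ⬝ᵥ Y ω k) = fun ω => ∑ i', ∑ r, (Pi.single k c : ι → κ → ℝ) i' r * Y ω i' r :=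
    fun k c => funext fun ω => (sum_sum_single_mul k c (Y ω)).symm
  have hL2 : ∀ k (c : κ → ℝ), MemLp (fun ω => c ⬝ᵥ Y ω k) 2 P := fun k c => by
    rw [hsingle]; exact memLp_two_of_map_eq_gaussianReal (hY _)
  have hcov := covariance_eq_sub (hL2 i a) (hL2 j b)
  rw [hsingle i a, hsingle j b, covariance_eq_kronForm hA hS m hY, kronForm_single_single,
    ← hsingle, ← hsingle] at hcov
  exact hcov.symm

end Gaussian

theorem log_div_eq_alr_sub {H : ℕ} {w : Fin (H + 1) → ℝ} (hw : ∀ h, 0 < w h) (l m : Fin H) :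
    Real.log (w l.castSucc / w m.castSucc) = alr w l - alr w m := by
  simp only [alr]
  rw [Real.log_div (hw _).ne' (hw _).ne', Real.log_div (hw _).ne' (hw _).ne',
    Real.log_div (hw _).ne' (hw _).ne']
  ring

theorem logisticMCAR_marginal_covariance_general
    (H I : ℕ) {Ω : Type*} [MeasureSpace Ω] (P : Measure Ω) [IsProbabilityMeasure P]
    (G : Matrix (Fin I) (Fin I) ℝ)
    (hG01 : ∀ i j, G i j = 0 ∨ G i j = 1)
    (hGsymm : G.IsSymm)
    (ρ : ℝ) (hρ : ρ ∈ Set.Ioo (0 : ℝ) 1)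
    (S : Matrix (Fin H) (Fin H) ℝ) (hS : S.PosDef)
    (A : Matrix (Fin I) (Fin I) ℝ)
    (hA : A = (Matrix.diagonal (fun i => ρ * ∑ j, G i j + 1 - ρ) - ρ • G)⁻¹)
    (W : Ω → Fin I → Fin (H + 1) → ℝ)
    (hSpos : ∀ ω i, W ω i ∈ Spos H)
    (hgauss : ∀ c : Fin I → Fin H → ℝ,
      Measure.map (fun ω => ∑ i, ∑ r, c i r * alr (W ω i) r) P =
        ProbabilityTheory.gaussianReal 0
          (Real.toNNReal
            (∑ i, ∑ j, ∑ r, ∑ s, c i r * (A i j * S r s) * c j s)))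
    (i j : Fin I) :
    (∀ l m : Fin H,
      ∫ ω, Real.log (W ω i l.castSucc / W ω i m.castSucc) *
            Real.log (W ω j l.castSucc / W ω j m.castSucc) ∂P -
        (∫ ω, Real.log (W ω i l.castSucc / W ω i m.castSucc) ∂P) *
          (∫ ω, Real.log (W ω j l.castSucc / W ω j m.castSucc) ∂P) =
      A i j * (S l l - 2 * S l m + S m m)) ∧
    (∀ l : Fin H,
      ∫ ω, Real.log (W ω i l.castSucc / W ω i (Fin.last H)) *
            Real.log (W ω j l.castSucc / W ω j (Fin.last H)) ∂P -
        (∫ ω, Real.log (W ω i l.castSucc / W ω i (Fin.last H)) ∂P) *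
          (∫ ω, Real.log (W ω j l.castSucc / W ω j (Fin.last H)) ∂P) =
      A i j * S l l) := by
  have hA_psd : A.PosSemidef := hA ▸ (posSemidef_mcarPrecision hGsymm
    (fun i j => by rcases hG01 i j with h | h <;> simp [h]) hρ.1.le hρ.2.le).inv
  have hcov := integral_dotProduct_mul_sub_eq hA_psd hS.posSemidef (fun _ => 0) hgauss i j
  constructor
  · intro l m
    have hlog : ∀ k ω, Real.log (W ω k l.castSucc / W ω k m.castSucc)
        = (Pi.single l 1 - Pi.single m 1) ⬝ᵥ alr (W ω k) := fun k ω => by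
      rw [log_div_eq_alr_sub (hSpos ω k).1, sub_dotProduct, single_one_dotProduct,
        single_one_dotProduct]
    simp only [hlog, hcov]
    simp only [mulVec_sub, dotProduct_sub, mulVec_single_one, sub_dotProduct,
      single_one_dotProduct, col_apply, (isHermitian_iff_isSymm.mp hS.isHermitian).apply l m]
    ring
  · intro l
    simpa [alr, mulVec_single_one] using hcov (Pi.single l 1) (Pi.single l 1)

/-- Proposition 2 (marginal covariances of the logisticMCAR with `m̃ = 0`).
The joint MCAR law of `w̃ = (alr w_1, …, alr w_I)` is the centered Gaussian with
covariance `A ⊗ Σ`, `A = (F − ρG)⁻¹` (characterized below through its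
one-dimensional linear projections).  Then
`Cov(log(w_{il}/w_{im}), log(w_{jl}/w_{jm})) = A_{ij}(Σ_{ll} − 2Σ_{lm} + Σ_{mm})`
and `Cov(log(w_{il}/w_{iH}), log(w_{jl}/w_{jH})) = A_{ij} Σ_{ll}`. -/
theorem logisticMCAR_marginal_covariance
    (H I : ℕ) {Ω : Type*} [MeasureSpace Ω] (P : Measure Ω) [IsProbabilityMeasure P]
    (G : Matrix (Fin I) (Fin I) ℝ)
    (hG01 : ∀ i j, G i j = 0 ∨ G i j = 1)
    (hGsymm : G.IsSymm) (hGdiag : ∀ i, G i i = 0)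
    (ρ : ℝ) (hρ : ρ ∈ Set.Ioo (0 : ℝ) 1)
    (S : Matrix (Fin H) (Fin H) ℝ) (hS : S.PosDef)
    (A : Matrix (Fin I) (Fin I) ℝ)
    (hA : A = (Matrix.diagonal (fun i => ρ * ∑ j, G i j + 1 - ρ) - ρ • G)⁻¹)
    (W : Ω → Fin I → Fin (H + 1) → ℝ)
    (hmeas : ∀ i l, Measurable fun ω => W ω i l)
    (hSpos : ∀ ω i, W ω i ∈ Spos H)
    (hgauss : ∀ c : Fin I → Fin H → ℝ,
      Measure.map (fun ω => ∑ i, ∑ r, c i r * alr (W ω i) r) P =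
        ProbabilityTheory.gaussianReal 0
          (Real.toNNReal
            (∑ i, ∑ j, ∑ r, ∑ s, c i r * (A i j * S r s) * c j s)))
    (i j : Fin I) :
    (∀ l m : Fin H,
      ∫ ω, Real.log (W ω i l.castSucc / W ω i m.castSucc) *
            Real.log (W ω j l.castSucc / W ω j m.castSucc) ∂P -
        (∫ ω, Real.log (W ω i l.castSucc / W ω i m.castSucc) ∂P) *
          (∫ ω, Real.log (W ω j l.castSucc / W ω j m.castSucc) ∂P) =
      A i j * (S l l - 2 * S l m + S m m)) ∧
    (∀ l : Fin H,
      ∫ ω, Real.log (W ω i l.castSucc / W ω i (Fin.last H)) *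
            Real.log (W ω j l.castSucc / W ω j (Fin.last H)) ∂P -
        (∫ ω, Real.log (W ω i l.castSucc / W ω i (Fin.last H)) ∂P) *
          (∫ ω, Real.log (W ω j l.castSucc / W ω j (Fin.last H)) ∂P) =
      A i j * S l l) :=
  logisticMCAR_marginal_covariance_general H I P G hG01 hGsymm ρ hρ S hS A hA W hSpos hgauss i j
end

section
/- Pólya-Gamma integral identity: for all η ∈ ℝ, a ∈ ℝ, and b > 0, (e^η)^a / (1 + e^η)^b = 2^{-b} e^{(a − b/2)η} ∫_0^∞ e^{−ω η²/2} p(ω) dω, where p is the density of the PG(b, 0) Pólya-Gamma distribution. -/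
open MeasureTheory

/-! At `t = η²/2` the Laplace transform gives `cosh (η/2) ^ (-b)`, and the whole identity is the
factorisation `1 + e^η = 2 e^{η/2} cosh (η/2)` raised to the power `b`. -/

namespace Real

lemma one_add_exp_eq_two_mul_exp_half_mul_cosh_half (x : ℝ) :
    1 + exp x = 2 * exp (x / 2) * cosh (x / 2) := by
  rw [cosh_eq, mul_div_assoc', mul_assoc, mul_div_cancel_left₀ _ two_ne_zero, mul_add, ← exp_add,
    ← exp_add]
  norm_num [add_comm]

lemma cosh_sqrt_sq_div_two_div_two (x : ℝ) : cosh (√(x ^ 2 / 2 / 2)) = cosh (x / 2) := by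
  rw [show x ^ 2 / 2 / 2 = (x / 2) ^ 2 by ring, sqrt_sq_eq_abs, cosh_abs]

lemma exp_rpow_div_one_add_exp_rpow (x a b : ℝ) :
    exp x ^ a / (1 + exp x) ^ b = 2 ^ (-b) * exp ((a - b / 2) * x) * cosh (x / 2) ^ (-b) := by
  have hcosh : 0 < cosh (x / 2) := cosh_pos _
  rw [one_add_exp_eq_two_mul_exp_half_mul_cosh_half, mul_rpow (by positivity) hcosh.le,
    mul_rpow zero_le_two (exp_pos _).le, ← exp_mul, ← exp_mul, div_eq_mul_inv, mul_inv, mul_inv,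
    ← rpow_neg zero_le_two, ← rpow_neg hcosh.le, ← exp_neg,
    show (a - b / 2) * x = x * a + -(x / 2 * b) by ring, exp_add]
  ring

end Real

theorem polya_gamma_identity_general
    (b : ℝ) (p : ℝ → ℝ)
    (hp_laplace : ∀ t : ℝ, 0 ≤ t →
      ∫ ω in Set.Ioi (0 : ℝ), Real.exp (-ω * t) * p ω =
        (Real.cosh (Real.sqrt (t / 2))) ^ (-b)) :
    ∀ η a : ℝ,
      (Real.exp η) ^ a / (1 + Real.exp η) ^ b =
        2 ^ (-b) * Real.exp ((a - b / 2) * η) *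
          ∫ ω in Set.Ioi (0 : ℝ), Real.exp (-ω * η ^ 2 / 2) * p ω := by
  intro η a
  have hlaplace : ∫ ω in Set.Ioi (0 : ℝ), Real.exp (-ω * η ^ 2 / 2) * p ω =
      Real.cosh (η / 2) ^ (-b) := by
    simp_rw [mul_div_assoc]
    rw [hp_laplace _ (by positivity), Real.cosh_sqrt_sq_div_two_div_two]
  rw [hlaplace, Real.exp_rpow_div_one_add_exp_rpow]

/-- The Pólya-Gamma integral identity: if `p` is the density of the `PG(b,0)`
distribution — characterized by its Laplace transform
`∫_0^∞ e^{−ωt} p(ω) dω = cosh(√(t/2))^{−b}` — then for all `η, a ∈ ℝ` and `b > 0`,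
`(e^η)^a / (1+e^η)^b = 2^{−b} e^{(a−b/2)η} ∫_0^∞ e^{−ωη²/2} p(ω) dω`. -/
theorem polya_gamma_identity
    (b : ℝ) (hb : 0 < b) (p : ℝ → ℝ)
    (hp_nonneg : ∀ ω, 0 ≤ p ω)
    (hp_laplace : ∀ t : ℝ, 0 ≤ t →
      ∫ ω in Set.Ioi (0 : ℝ), Real.exp (-ω * t) * p ω =
        (Real.cosh (Real.sqrt (t / 2))) ^ (-b)) :
    ∀ η a : ℝ,
      (Real.exp η) ^ a / (1 + Real.exp η) ^ b =
        2 ^ (-b) * Real.exp ((a - b / 2) * η) *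
          ∫ ω in Set.Ioi (0 : ℝ), Real.exp (-ω * η ^ 2 / 2) * p ω :=
  polya_gamma_identity_general b p hp_laplace
end
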